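/- arXiv:2104.00414 — 4 statements merged into one kernel-verified Lean document; each statement's English description precedes it below -/
import Mathlib

section
/- Suppose f = h + conj(g) is a harmonic entire mapping, where f, h, g have orders ρ, ρ_h, ρ_g respectively. Then ρ = max{ρ_h, ρ_g}. -/
open Filter

/-- Maximum modulus of `F` on the circle `|z| = r`. -/
noncomputable def maxMod (F : ℂ → ℂ) (r : ℝ) : ℝ :=
  sSup ((fun z => ‖F z‖) '' Metric.sphere (0 : ℂ) r)

/-- Order of a (harmonic) entire mapping. -/
noncomputable def hOrder (F : ℂ → ℂ) : EReal :=
  limsup (fun r : ℝ => ((Real.log (Real.log (maxMod F r)) / Real.log r : ℝ) : EReal)) atTop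

/-! On the circle `|z| = R` one has `z⁻¹ = conj z / R²`, so for `n ≥ 1` the `n`-th Cauchy integral
of `conj ∘ g` is `R⁻²ⁿ` times the conjugate of the mean of `zⁿ g z`, which vanishes by the mean
value property. Hence `h` and `f = h + conj g` have the same Cauchy coefficients `aₙ` for `n ≥ 1`,
and `|aₙ| Rⁿ ≤ M(R, f)`. Summing the Taylor series of `h` on `|z| = r` with `R = 2r` gives
`M(r, h) ≤ |h 0| + M(2r, f)`, and likewise for `g` since `|f| = |g + conj h|`; conversely
`M(r, f) ≤ M(r, h) + M(r, g)`. These comparisons transfer to the orders once `M(r, ·) → ∞`, which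
the coefficient bound gives for every nonconstant map; constant maps have order `0`. -/

open Real

noncomputable def growthOrder (u : ℝ → ℝ) : EReal :=
  limsup (fun r : ℝ => ((log (log (u r)) / log r : ℝ) : EReal)) atTop

theorem hOrder_eq_growthOrder (F : ℂ → ℂ) : hOrder F = growthOrder (maxMod F) := rfl

section growthOrder

variable {u : ℝ → ℝ}

theorem growthOrder_eq_zero_of_eventually_const {c : ℝ} (hu : ∀ᶠ r in atTop, u r = c) :
    growthOrder u = 0 := by
  have hlim : Tendsto (fun r => ((log (log c) / log r : ℝ) : EReal)) atTop (nhds 0) :=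
    EReal.tendsto_coe.mpr (tendsto_const_nhds.div_atTop tendsto_log_atTop)
  refine (limsup_congr ?_).trans hlim.limsup_eq
  filter_upwards [hu] with r hr
  rw [hr]

theorem growthOrder_nonneg (hu : Tendsto u atTop atTop) : 0 ≤ growthOrder u := by
  refine le_limsup_of_frequently_le' (Eventually.frequently ?_)
  filter_upwards [hu.eventually_ge_atTop (exp 1), eventually_ge_atTop 1] with r hur hr
  have hlog : 1 ≤ log (u r) := (le_log_iff_exp_le ((exp_pos 1).trans_le hur)).mpr hur
  exact EReal.coe_nonneg.mpr (div_nonneg (log_nonneg hlog) (log_nonneg hr))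

theorem eventually_le_exp_rpow_of_growthOrder_lt {t : ℝ} (ht : growthOrder u < t) :
    ∀ᶠ r in atTop, u r ≤ exp (r ^ t) := by
  filter_upwards [eventually_lt_of_limsup_lt ht, eventually_gt_atTop 1] with r hlt hr
  rcases le_or_gt (u r) 1 with hu1 | hu1
  · exact hu1.trans (one_le_exp (by positivity))
  have hlogu : 0 < log (u r) := log_pos hu1
  have hloglog : log (log (u r)) < log (r ^ t) := by
    rw [log_rpow (by linarith), ← div_lt_iff₀ (log_pos hr)]
    exact_mod_cast hlt
  rw [log_lt_log_iff hlogu (by positivity), log_lt_iff_lt_exp (by linarith)] at hloglog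
  exact hloglog.le

theorem growthOrder_le_of_eventually_le {t A B : ℝ} (hu : ∀ᶠ r in atTop, 1 ≤ u r) (ht : 0 < t)
    (hbound : ∀ᶠ r in atTop, u r ≤ A * exp (B * r ^ t)) : growthOrder u ≤ t := by
  set K := |log A| + |B| + 1
  have hK : 1 ≤ K := le_add_of_nonneg_left (by positivity)
  have hlog_le : ∀ᶠ r in atTop, log (log (u r)) / log r ≤ log K / log r + t := by
    filter_upwards [hu, hbound, eventually_gt_atTop 1] with r hu1 hur hr
    have hrt : 1 ≤ r ^ t := one_le_rpow hr.le ht.le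
    have hA : 0 < A := pos_of_mul_pos_left (one_pos.trans_le (hu1.trans hur)) (exp_pos _).le
    have hlogu : log (u r) ≤ K * r ^ t := calc
      log (u r) ≤ log A + B * r ^ t := by
        simpa [log_mul hA.ne' (exp_pos _).ne'] using log_le_log (by linarith) hur
      _ ≤ |log A| * r ^ t + |B| * r ^ t := by
        gcongr
        · exact (le_abs_self _).trans (le_mul_of_one_le_right (abs_nonneg _) hrt)
        · exact le_abs_self _
      _ ≤ K * r ^ t := by nlinarith
    have hloglog : log (log (u r)) ≤ log K + t * log r := by
      rw [← log_rpow (by linarith), ← log_mul (by positivity) (by positivity)]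
      rcases (log_nonneg hu1).eq_or_lt with h0 | hpos
      · rw [← h0, log_zero]
        exact log_nonneg (one_le_mul_of_one_le_of_one_le hK hrt)
      · exact log_le_log hpos hlogu
    calc log (log (u r)) / log r ≤ (log K + t * log r) / log r := by
          gcongr; exact (log_pos hr).le
      _ = log K / log r + t := by field_simp [(log_pos hr).ne']
  have hlim : Tendsto (fun r => ((log K / log r + t : ℝ) : EReal)) atTop (nhds t) := by
    refine EReal.tendsto_coe.mpr ?_
    simpa using (tendsto_const_nhds.div_atTop tendsto_log_atTop).add_const t
  refine (limsup_le_limsup ?_).trans_eq hlim.limsup_eq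
  filter_upwards [hlog_le] with r hr
  exact_mod_cast hr

theorem growthOrder_le_of_forall_lt {σ : EReal} (hσ : 0 ≤ σ) (hu : ∀ᶠ r in atTop, 1 ≤ u r)
    (hbound : ∀ t : ℝ, σ < t → ∃ A B : ℝ, ∀ᶠ r in atTop, u r ≤ A * exp (B * r ^ t)) :
    growthOrder u ≤ σ := by
  refine EReal.le_of_forall_lt_iff_le.mp fun t hσt => ?_
  obtain ⟨A, B, hAB⟩ := hbound t hσt
  exact growthOrder_le_of_eventually_le hu (EReal.coe_pos.mp (hσ.trans_lt hσt)) hAB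

end growthOrder

open Metric ComplexConjugate

section maxMod

theorem maxMod_nonneg (F : ℂ → ℂ) (r : ℝ) : 0 ≤ maxMod F r :=
  Real.sSup_nonneg (by rintro x ⟨z, -, rfl⟩; exact norm_nonneg _)

variable {F : ℂ → ℂ} {r : ℝ}

theorem norm_le_maxMod (hF : Continuous F) {z : ℂ} (hz : z ∈ sphere (0 : ℂ) r) :
    ‖F z‖ ≤ maxMod F r :=
  le_csSup ((isCompact_sphere 0 r).image (continuous_norm.comp hF)).bddAbove ⟨z, hz, rfl⟩

theorem maxMod_le {C : ℝ} (hC : 0 ≤ C) (hF : ∀ z ∈ sphere (0 : ℂ) r, ‖F z‖ ≤ C) :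
    maxMod F r ≤ C :=
  Real.sSup_le (by rintro x ⟨z, hz, rfl⟩; exact hF z hz) hC

theorem maxMod_const (c : ℂ) (hr : 0 < r) : maxMod (fun _ => c) r = ‖c‖ := by
  rw [maxMod, (NormedSpace.sphere_nonempty.mpr hr.le).image_const, csSup_singleton]

theorem circleAverage_norm_le_maxMod (hF : Continuous F) (hr : 0 < r) :
    circleAverage (fun z => ‖F z‖) 0 r ≤ maxMod F r := by
  refine circleAverage_mono_on_of_le_circle ?_ fun z hz => norm_le_maxMod hF ?_
  · exact (continuous_norm.comp hF).continuousOn.circleIntegrable hr.le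
  · rwa [abs_of_pos hr] at hz

theorem hOrder_const (c : ℂ) : hOrder (fun _ => c) = 0 :=
  growthOrder_eq_zero_of_eventually_const
    ((eventually_gt_atTop 0).mono fun _ hr => maxMod_const c hr)

end maxMod

section cauchyPowerSeries

variable {h g : ℂ → ℂ}

theorem norm_cauchyPowerSeries_mul_pow_le_maxMod {F : ℂ → ℂ} (hF : Continuous F) {R : ℝ}
    (hR : 0 < R) (n : ℕ) : ‖cauchyPowerSeries F 0 R n‖ * R ^ n ≤ maxMod F R := by
  have hbound : ‖cauchyPowerSeries F 0 R n‖ ≤ circleAverage (fun z => ‖F z‖) 0 R * R⁻¹ ^ n :=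
    (norm_cauchyPowerSeries_le F 0 R n).trans_eq (by rw [abs_of_pos hR]; rfl)
  calc ‖cauchyPowerSeries F 0 R n‖ * R ^ n
      ≤ circleAverage (fun z => ‖F z‖) 0 R * R⁻¹ ^ n * R ^ n := by gcongr
    _ = circleAverage (fun z => ‖F z‖) 0 R := by
      rw [mul_assoc, ← mul_pow, inv_mul_cancel₀ hR.ne', one_pow, mul_one]
    _ ≤ maxMod F R := circleAverage_norm_le_maxMod hF hR

theorem circleIntegral_inv_pow_smul_conj_eq_zero (hg : Differentiable ℂ g) {n : ℕ} (hn : n ≠ 0)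
    (R : ℝ) :
    (∮ z in C(0, R), z⁻¹ ^ n • z⁻¹ • conj (g z)) = 0 := by
  rcases eq_or_ne R 0 with rfl | hR
  · exact circleIntegral.integral_radius_zero _ _
  have hconj : Set.EqOn (fun z => z⁻¹ ^ n • conj (g z))
      (fun z => ((R : ℂ) ^ 2)⁻¹ ^ n • conj (z ^ n * g z)) (sphere 0 |R|) := fun z hz => by
    have hinv : z⁻¹ = conj z * ((R : ℂ) ^ 2)⁻¹ := by
      rw [Complex.inv_def, Complex.normSq_eq_norm_sq, mem_sphere_zero_iff_norm.mp hz, sq_abs]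
      push_cast; rfl
    simp only [hinv, smul_eq_mul, map_mul, map_pow]
    ring
  have hdiff : Differentiable ℂ fun z => z ^ n * g z := (differentiable_pow n).mul hg
  have hmean : circleAverage (fun z => z⁻¹ ^ n • conj (g z)) 0 R = 0 := by
    have hmean_conj : circleAverage (fun z => conj (z ^ n * g z)) 0 R =
        conj (circleAverage (fun z => z ^ n * g z) 0 R) :=
      Complex.conjCLE.toContinuousLinearMap.circleAverage_comp_comm
        hdiff.continuous.continuousOn.circleIntegrable'
    rw [circleAverage_congr_sphere hconj, circleAverage_fun_smul, hmean_conj,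
      hdiff.diffContOnCl.circleAverage]
    simp [hn]
  have := circleAverage_eq_circleIntegral (f := fun z => z⁻¹ ^ n • conj (g z)) (c := 0) hR
  rw [hmean] at this
  simpa [smul_eq_mul, mul_left_comm, Real.pi_ne_zero, Complex.I_ne_zero] using this.symm

theorem cauchyPowerSeries_add_conj (hh : Differentiable ℂ h) (hg : Differentiable ℂ g) {n : ℕ}
    (hn : n ≠ 0) (R : ℝ) :
    cauchyPowerSeries (fun z => h z + conj (g z)) 0 R n = cauchyPowerSeries h 0 R n := by
  have hint : ∀ F : ℂ → ℂ, Continuous F →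
      CircleIntegrable (fun z => (z - 0)⁻¹ ^ n • (z - 0)⁻¹ • F z) 0 R := fun F hF => by
    rcases eq_or_ne R 0 with rfl | hR
    · exact circleIntegrable_zero_radius
    have hne : ∀ z ∈ sphere (0 : ℂ) |R|, z - 0 ≠ 0 := fun z hz => by
      simpa using ne_of_mem_sphere hz (abs_ne_zero.mpr hR)
    refine ContinuousOn.circleIntegrable' ?_
    fun_prop (disch := assumption)
  have hconj : ∮ z in C(0, R), (z - 0)⁻¹ ^ n • (z - 0)⁻¹ • conj (g z) = 0 := by
    simpa only [sub_zero] using circleIntegral_inv_pow_smul_conj_eq_zero hg hn R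
  simp_rw [cauchyPowerSeries, smul_add]
  rw [circleIntegral.integral_add (hint h hh.continuous)
    (hint (fun z => conj (g z)) (Complex.continuous_conj.comp hg.continuous)), hconj, add_zero]

end cauchyPowerSeries

section harmonic

variable {h g : ℂ → ℂ}

theorem norm_cauchyPowerSeries_mul_pow_le_maxMod_add_conj (hh : Differentiable ℂ h)
    (hg : Differentiable ℂ g) {R : ℝ} (hR : 0 < R) {n : ℕ} (hn : n ≠ 0) :
    ‖cauchyPowerSeries h 0 R n‖ * R ^ n ≤ maxMod (fun z => h z + conj (g z)) R := by
  rw [← cauchyPowerSeries_add_conj hh hg hn]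
  exact norm_cauchyPowerSeries_mul_pow_le_maxMod
    (hh.continuous.add (Complex.continuous_conj.comp hg.continuous)) hR n

theorem hasFPowerSeriesOnBall_cauchyPowerSeries (hh : Differentiable ℂ h) {R : ℝ} (hR : 0 < R) :
    HasFPowerSeriesOnBall h (cauchyPowerSeries h 0 R) 0 ⊤ := by
  simpa [Real.coe_toNNReal _ hR.le] using
    hh.hasFPowerSeriesOnBall 0 (R := R.toNNReal) (Real.toNNReal_pos.mpr hR)

theorem cauchyPowerSeries_eq_of_pos (hh : Differentiable ℂ h) {R S : ℝ} (hR : 0 < R)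
    (hS : 0 < S) : cauchyPowerSeries h 0 R = cauchyPowerSeries h 0 S :=
  (hasFPowerSeriesOnBall_cauchyPowerSeries hh hR).hasFPowerSeriesAt.eq_formalMultilinearSeries
    (hasFPowerSeriesOnBall_cauchyPowerSeries hh hS).hasFPowerSeriesAt

theorem exists_cauchyPowerSeries_ne_zero (hh : Differentiable ℂ h) {z : ℂ} (hz : h z ≠ h 0) :
    ∃ n ≠ 0, cauchyPowerSeries h 0 1 n ≠ 0 := by
  by_contra! hzero
  have hp := hasFPowerSeriesOnBall_cauchyPowerSeries hh one_pos
  have hsum := hp.hasSum (y := z) (by simp)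
  rw [zero_add] at hsum
  refine hz ((hsum.unique (hasSum_single 0 fun n hn => ?_)).trans (hp.coeff_zero _))
  simp [hzero n hn]

theorem tendsto_maxMod_add_conj (hh : Differentiable ℂ h) (hg : Differentiable ℂ g) {z : ℂ}
    (hz : h z ≠ h 0) : Tendsto (maxMod fun z => h z + conj (g z)) atTop atTop := by
  obtain ⟨n, hn, hne⟩ := exists_cauchyPowerSeries_ne_zero hh hz
  refine tendsto_atTop_mono' atTop ?_ (tendsto_id.const_mul_atTop (norm_pos_iff.mpr hne))
  filter_upwards [eventually_ge_atTop 1] with R hR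
  calc ‖cauchyPowerSeries h 0 1 n‖ * R ≤ ‖cauchyPowerSeries h 0 1 n‖ * R ^ n := by
        gcongr; exact le_self_pow₀ hR hn
    _ = ‖cauchyPowerSeries h 0 R n‖ * R ^ n := by
        rw [cauchyPowerSeries_eq_of_pos hh (one_pos.trans_le hR) one_pos]
    _ ≤ _ := norm_cauchyPowerSeries_mul_pow_le_maxMod_add_conj hh hg (one_pos.trans_le hR) hn

theorem maxMod_le_norm_add_maxMod_add_conj (hh : Differentiable ℂ h) (hg : Differentiable ℂ g)
    {r : ℝ} (hr : 0 < r) :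
    maxMod h r ≤ ‖h 0‖ + maxMod (fun z => h z + conj (g z)) (2 * r) := by
  set M := maxMod (fun z => h z + conj (g z)) (2 * r)
  set p := cauchyPowerSeries h 0 (2 * r)
  have hp := hasFPowerSeriesOnBall_cauchyPowerSeries hh (by positivity : 0 < 2 * r)
  refine maxMod_le (add_nonneg (norm_nonneg _) (maxMod_nonneg _ _)) fun z hz => ?_
  have hzr : ‖z‖ = r := mem_sphere_zero_iff_norm.mp hz
  have hsum : HasSum (fun n => p (n + 1) fun _ => z) (h z - h 0) := by
    have hsum := hp.hasSum (y := z) (by simp)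
    rw [zero_add] at hsum
    rw [← hp.coeff_zero fun _ => z]
    simpa only [Finset.range_one, Finset.sum_singleton] using (hasSum_nat_add_iff' 1).mpr hsum
  have hterm : ∀ n, ‖p (n + 1) fun _ => z‖ ≤ M / 2 / 2 ^ n := fun n => calc
    ‖p (n + 1) fun _ => z‖ ≤ ‖p (n + 1)‖ * r ^ (n + 1) := by
        simpa [hzr] using (p (n + 1)).le_opNorm fun _ => z
    _ = ‖p (n + 1)‖ * (2 * r) ^ (n + 1) / 2 ^ (n + 1) := by
        rw [mul_pow]; field_simp
    _ ≤ M / 2 ^ (n + 1) := by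
        gcongr
        exact norm_cauchyPowerSeries_mul_pow_le_maxMod_add_conj hh hg (by positivity) n.succ_ne_zero
    _ = M / 2 / 2 ^ n := by rw [pow_succ]; ring
  calc ‖h z‖ = ‖h 0 + (h z - h 0)‖ := by rw [add_sub_cancel]
    _ ≤ ‖h 0‖ + ‖h z - h 0‖ := norm_add_le _ _
    _ ≤ ‖h 0‖ + M := by grw [hsum.norm_le_of_bounded (hasSum_geometric_two' M) hterm]

end harmonic

section harmonicOrder

variable {h g : ℂ → ℂ}

theorem maxMod_add_conj_comm :
    maxMod (fun z => h z + conj (g z)) = maxMod (fun z => g z + conj (h z)) := by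
  have heq : (fun z => ‖h z + conj (g z)‖) = fun z => ‖g z + conj (h z)‖ := funext fun z => by
    rw [← Complex.norm_conj, map_add, Complex.conj_conj, add_comm]
  unfold maxMod
  rw [heq]

theorem hOrder_add_conj_comm :
    hOrder (fun z => h z + conj (g z)) = hOrder (fun z => g z + conj (h z)) := by
  rw [hOrder_eq_growthOrder, maxMod_add_conj_comm, ← hOrder_eq_growthOrder]

theorem maxMod_add_conj_le (hh : Continuous h) (hg : Continuous g) (r : ℝ) :
    maxMod (fun z => h z + conj (g z)) r ≤ maxMod h r + maxMod g r := by
  refine maxMod_le (add_nonneg (maxMod_nonneg h r) (maxMod_nonneg g r)) fun z hz => ?_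
  refine (norm_add_le _ _).trans ?_
  rw [Complex.norm_conj]
  exact add_le_add (norm_le_maxMod hh hz) (norm_le_maxMod hg hz)

theorem hOrder_add_conj_eq_zero_or_tendsto (hh : Differentiable ℂ h) (hg : Differentiable ℂ g) :
    hOrder (fun z => h z + conj (g z)) = 0 ∨
      Tendsto (maxMod fun z => h z + conj (g z)) atTop atTop := by
  by_cases hhc : ∃ z, h z ≠ h 0
  · exact .inr (tendsto_maxMod_add_conj hh hg hhc.choose_spec)
  by_cases hgc : ∃ z, g z ≠ g 0
  · exact .inr (maxMod_add_conj_comm ▸ tendsto_maxMod_add_conj hg hh hgc.choose_spec)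
  push Not at hhc hgc
  have hconst : (fun z => h z + conj (g z)) = fun _ => h 0 + conj (g 0) :=
    funext fun z => by rw [hhc z, hgc z]
  exact .inl (hconst ▸ hOrder_const _)

theorem hOrder_eq_zero_or_tendsto (hh : Differentiable ℂ h) :
    hOrder h = 0 ∨ Tendsto (maxMod h) atTop atTop := by
  simpa using hOrder_add_conj_eq_zero_or_tendsto hh (differentiable_const (0 : ℂ))

theorem hOrder_add_conj_nonneg (hh : Differentiable ℂ h) (hg : Differentiable ℂ g) :
    0 ≤ hOrder (fun z => h z + conj (g z)) :=
  (hOrder_add_conj_eq_zero_or_tendsto hh hg).elim (fun h0 => h0.ge) growthOrder_nonneg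

theorem hOrder_nonneg (hh : Differentiable ℂ h) : 0 ≤ hOrder h :=
  (hOrder_eq_zero_or_tendsto hh).elim (fun h0 => h0.ge) growthOrder_nonneg

theorem hOrder_add_conj_le (hh : Differentiable ℂ h) (hg : Differentiable ℂ g) :
    hOrder (fun z => h z + conj (g z)) ≤ max (hOrder h) (hOrder g) := by
  have hσ : 0 ≤ max (hOrder h) (hOrder g) := le_max_of_le_left (hOrder_nonneg hh)
  rcases hOrder_add_conj_eq_zero_or_tendsto hh hg with h0 | htend
  · exact h0 ▸ hσ
  refine growthOrder_le_of_forall_lt hσ (htend.eventually_ge_atTop 1) fun t ht => ⟨2, 1, ?_⟩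
  filter_upwards [eventually_le_exp_rpow_of_growthOrder_lt ((le_max_left _ _).trans_lt ht),
    eventually_le_exp_rpow_of_growthOrder_lt ((le_max_right _ _).trans_lt ht)] with r hhr hgr
  calc maxMod (fun z => h z + conj (g z)) r ≤ maxMod h r + maxMod g r :=
        maxMod_add_conj_le hh.continuous hg.continuous r
    _ ≤ 2 * exp (1 * r ^ t) := by rw [one_mul]; linarith

theorem hOrder_le_hOrder_add_conj (hh : Differentiable ℂ h) (hg : Differentiable ℂ g) :
    hOrder h ≤ hOrder (fun z => h z + conj (g z)) := by
  have hσ := hOrder_add_conj_nonneg hh hg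
  rcases hOrder_eq_zero_or_tendsto hh with h0 | htend
  · exact h0 ▸ hσ
  refine growthOrder_le_of_forall_lt hσ (htend.eventually_ge_atTop 1)
    fun t ht => ⟨‖h 0‖ + 1, 2 ^ t, ?_⟩
  have hdouble : Tendsto (fun r : ℝ => 2 * r) atTop atTop := tendsto_id.const_mul_atTop two_pos
  filter_upwards [hdouble.eventually (eventually_le_exp_rpow_of_growthOrder_lt ht),
    eventually_gt_atTop 0] with r hfr hr
  have hexp : 1 ≤ exp (2 ^ t * r ^ t) := one_le_exp (by positivity)
  calc maxMod h r ≤ ‖h 0‖ + maxMod (fun z => h z + conj (g z)) (2 * r) :=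
        maxMod_le_norm_add_maxMod_add_conj hh hg hr
    _ ≤ ‖h 0‖ + exp (2 ^ t * r ^ t) := by
        rw [← mul_rpow zero_le_two hr.le]; gcongr
    _ ≤ (‖h 0‖ + 1) * exp (2 ^ t * r ^ t) := by nlinarith [norm_nonneg (h 0)]

end harmonicOrder

theorem order_of_harmonic_eq_max_general (h g : ℂ → ℂ)
    (hh : Differentiable ℂ h) (hg : Differentiable ℂ g) :
    hOrder (fun z => h z + starRingEnd ℂ (g z)) = max (hOrder h) (hOrder g) :=
  le_antisymm (hOrder_add_conj_le hh hg) <| max_le (hOrder_le_hOrder_add_conj hh hg)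
    ((hOrder_le_hOrder_add_conj hg hh).trans_eq hOrder_add_conj_comm)

theorem order_of_harmonic_eq_max (h g : ℂ → ℂ)
    (hh : Differentiable ℂ h) (hg : Differentiable ℂ g) (hg0 : g 0 = 0) :
    hOrder (fun z => h z + starRingEnd ℂ (g z)) = max (hOrder h) (hOrder g) :=
  order_of_harmonic_eq_max_general h g hh hg
end

section
/- Let f(z) = z + Σ_{k≥2} a_k z^k + conj(Σ_{k≥1} b_k z^k) be harmonic in the unit disk with |b_1| < 1 and Σ_{k≥2} k(|a_k| + |b_k|) ≤ 1 − |b_1|. Then f is sense-preserving and univalent in the unit disk. -/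
/-!
Write `f = (id + P) + conj G` with `P z = ∑ a_k z^k` (`k ≥ 2`) and `G z = ∑ b_k z^k` (`k ≥ 1`),
and let `A = ∑ k |a_k|`, `B = ∑_{k ≥ 2} k |b_k|`. Termwise differentiation gives
`|P'(z)| ≤ |z| A` and `|G'(z)| ≤ |b_1| + |z| B`, and the coefficient condition makes
`r A + |b_1| + r B < 1` for `r < 1`. On the closed disc of radius `r = max |z|, |w|` the mean
value inequality then turns `f z = f w`, i.e. `z - w = -(P z - P w) - conj (G z - G w)`, into
`|z - w| ≤ (r A + |b_1| + r B) |z - w|`, so `z = w`; the same bounds give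
`|h'| ≥ 1 - |z| A > |b_1| + |z| B ≥ |g'|`.
-/

open Metric Set

theorem tsum_mul_pow_succ_le {u : ℕ → ℝ} (hu : Summable u) (hu0 : ∀ k, 0 ≤ u k) {r : ℝ}
    (hr0 : 0 ≤ r) (hr1 : r ≤ 1) : ∑' k, u k * r ^ (k + 1) ≤ r * ∑' k, u k := by
  have hle : ∀ k, u k * r ^ (k + 1) ≤ r * u k := fun k => by
    rw [pow_succ', mul_left_comm]
    exact mul_le_mul_of_nonneg_left (mul_le_of_le_one_right (hu0 k) (pow_le_one₀ hr0 hr1)) hr0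
  rw [← tsum_mul_left]
  exact (hu.mul_left r).of_nonneg_of_le (fun k => by have := hu0 k; positivity) hle
    |>.tsum_le_tsum hle (hu.mul_left r)

theorem tsum_mul_pow_le {u : ℕ → ℝ} (hu : Summable u) (hu0 : ∀ k, 0 ≤ u k) {r : ℝ}
    (hr0 : 0 ≤ r) (hr1 : r ≤ 1) : ∑' k, u k * r ^ k ≤ u 0 + r * ∑' k, u (k + 1) := by
  have hsum : Summable fun k => u k * r ^ k :=
    hu.of_nonneg_of_le (fun k => by have := hu0 k; positivity)
      fun k => mul_le_of_le_one_right (hu0 k) (pow_le_one₀ hr0 hr1)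
  rw [hsum.tsum_eq_zero_add, pow_zero, mul_one]
  exact (add_le_add_iff_left _).2
    (tsum_mul_pow_succ_le ((summable_nat_add_iff 1).2 hu) (fun k => hu0 _) hr0 hr1)

section PowerSeries

variable (c : ℕ → ℂ) (m : ℕ)

-- At `k + m = 0` the exponent `k + m - 1` truncates to `0`, harmlessly: that term's coefficient
-- is `0`.
theorem hasDerivAt_tsum_mul_pow_add (hc : Summable fun k => ((k + m : ℕ) : ℝ) * ‖c k‖) {z : ℂ}
    (hz : z ∈ ball (0 : ℂ) 1) :
    HasDerivAt (fun w => ∑' k, c k * w ^ (k + m))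
      (∑' k, ((k + m : ℕ) : ℂ) * c k * z ^ (k + m - 1)) z := by
  refine hasDerivAt_tsum_of_isPreconnected (g := fun k w => c k * w ^ (k + m))
    (g' := fun k w => ((k + m : ℕ) : ℂ) * c k * w ^ (k + m - 1)) hc isOpen_ball
    (convex_ball 0 1).isPreconnected
    (fun k w _ => ?_) (fun k w hw => ?_) (mem_ball_self one_pos) ?_ hz
  · simpa only [mul_left_comm, mul_assoc] using (hasDerivAt_pow (k + m) w).const_mul (c k)
  · rw [norm_mul, norm_mul, Complex.norm_natCast, norm_pow]
    exact mul_le_of_le_one_right (by positivity)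
      (pow_le_one₀ (norm_nonneg w) (mem_ball_zero_iff.1 hw).le)
  · refine summable_of_ne_finset_zero (s := {0}) fun k hk => ?_
    rw [zero_pow (by simp_all), mul_zero]

theorem norm_deriv_tsum_mul_pow_add_le (hc : Summable fun k => ((k + m : ℕ) : ℝ) * ‖c k‖)
    {z : ℂ} (hz : z ∈ ball (0 : ℂ) 1) :
    ‖deriv (fun w => ∑' k, c k * w ^ (k + m)) z‖ ≤
      ∑' k, ((k + m : ℕ) : ℝ) * ‖c k‖ * ‖z‖ ^ (k + m - 1) := by
  have hle : ∀ k, ((k + m : ℕ) : ℝ) * ‖c k‖ * ‖z‖ ^ (k + m - 1) ≤ ((k + m : ℕ) : ℝ) * ‖c k‖ :=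
    fun k => mul_le_of_le_one_right (by positivity)
      (pow_le_one₀ (norm_nonneg z) (mem_ball_zero_iff.1 hz).le)
  rw [(hasDerivAt_tsum_mul_pow_add c m hc hz).deriv]
  refine tsum_of_norm_bounded (hc.of_nonneg_of_le (fun k => by positivity) hle).hasSum fun k => ?_
  rw [norm_mul, norm_mul, Complex.norm_natCast, norm_pow]

theorem norm_deriv_tsum_mul_pow_add_two_le (a : ℕ → ℂ)
    (ha : Summable fun k => ((k + 2 : ℕ) : ℝ) * ‖a (k + 2)‖) {z : ℂ} (hz : z ∈ ball (0 : ℂ) 1) :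
    ‖deriv (fun w => ∑' k, a (k + 2) * w ^ (k + 2)) z‖ ≤
      ‖z‖ * ∑' k : ℕ, ((k : ℝ) + 2) * ‖a (k + 2)‖ := by
  calc _ ≤ ∑' k : ℕ, ((k + 2 : ℕ) : ℝ) * ‖a (k + 2)‖ * ‖z‖ ^ (k + 2 - 1) :=
        norm_deriv_tsum_mul_pow_add_le (fun k => a (k + 2)) 2 ha hz
    _ = ∑' k : ℕ, ((k : ℝ) + 2) * ‖a (k + 2)‖ * ‖z‖ ^ (k + 1) := by push_cast; rfl
    _ ≤ _ := tsum_mul_pow_succ_le (by exact_mod_cast ha) (fun k => by positivity) (norm_nonneg z)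
        (mem_ball_zero_iff.1 hz).le

theorem norm_deriv_tsum_mul_pow_add_one_le (b : ℕ → ℂ)
    (hb : Summable fun k => ((k + 1 : ℕ) : ℝ) * ‖b (k + 1)‖) {z : ℂ} (hz : z ∈ ball (0 : ℂ) 1) :
    ‖deriv (fun w => ∑' k, b (k + 1) * w ^ (k + 1)) z‖ ≤
      ‖b 1‖ + ‖z‖ * ∑' k : ℕ, ((k : ℝ) + 2) * ‖b (k + 2)‖ := by
  calc _ ≤ ∑' k : ℕ, ((k + 1 : ℕ) : ℝ) * ‖b (k + 1)‖ * ‖z‖ ^ (k + 1 - 1) :=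
        norm_deriv_tsum_mul_pow_add_le (fun k => b (k + 1)) 1 hb hz
    _ = ∑' k : ℕ, ((k + 1 : ℕ) : ℝ) * ‖b (k + 1)‖ * ‖z‖ ^ k := rfl
    _ ≤ _ := by
      refine (tsum_mul_pow_le hb (fun k => by positivity) (norm_nonneg z)
        (mem_ball_zero_iff.1 hz).le).trans_eq ?_
      norm_num [add_assoc, one_add_one_eq_two]

end PowerSeries

section HarmonicCriterion

variable {P G : ℂ → ℂ}

theorem Convex.injOn_add_add_conj {s : Set ℂ} (hs : Convex ℝ s) {α β : ℝ}
    (hP : ∀ z ∈ s, DifferentiableAt ℂ P z) (hG : ∀ z ∈ s, DifferentiableAt ℂ G z)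
    (hP' : ∀ z ∈ s, ‖deriv P z‖ ≤ α) (hG' : ∀ z ∈ s, ‖deriv G z‖ ≤ β) (hαβ : α + β < 1) :
    InjOn (fun z => (z + P z) + starRingEnd ℂ (G z)) s := by
  intro z hz w hw hzw
  have hsub : z - w = -(P z - P w) - starRingEnd ℂ (G z - G w) := by
    rw [map_sub]
    linear_combination hzw
  have hle : ‖z - w‖ ≤ (α + β) * ‖z - w‖ :=
    calc ‖z - w‖ ≤ ‖P z - P w‖ + ‖G z - G w‖ := by
          rw [hsub, ← RCLike.norm_conj (G z - G w), ← norm_neg (P z - P w)]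
          exact norm_sub_le _ _
      _ ≤ α * ‖z - w‖ + β * ‖z - w‖ :=
          add_le_add (hs.norm_image_sub_le_of_norm_deriv_le hP hP' hw hz)
            (hs.norm_image_sub_le_of_norm_deriv_le hG hG' hw hz)
      _ = (α + β) * ‖z - w‖ := (add_mul _ _ _).symm
  have : ‖z - w‖ ≤ 0 := by nlinarith [norm_nonneg (z - w)]
  exact sub_eq_zero.1 (norm_le_zero_iff.1 this)

theorem mul_add_add_mul_lt_one {r A B β : ℝ} (hr0 : 0 ≤ r) (hr1 : r < 1) (hβ : β < 1)
    (hAB : A + B ≤ 1 - β) : r * A + (β + r * B) < 1 := by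
  nlinarith

variable {A B β : ℝ}

theorem injOn_ball_add_add_conj (hβ : β < 1) (hAB : A + B ≤ 1 - β) (hA : 0 ≤ A) (hB : 0 ≤ B)
    (hP : ∀ z ∈ ball (0 : ℂ) 1, DifferentiableAt ℂ P z)
    (hG : ∀ z ∈ ball (0 : ℂ) 1, DifferentiableAt ℂ G z)
    (hP' : ∀ z ∈ ball (0 : ℂ) 1, ‖deriv P z‖ ≤ ‖z‖ * A)
    (hG' : ∀ z ∈ ball (0 : ℂ) 1, ‖deriv G z‖ ≤ β + ‖z‖ * B) :
    InjOn (fun z => (z + P z) + starRingEnd ℂ (G z)) (ball (0 : ℂ) 1) := by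
  intro z hz w hw
  set r := max ‖z‖ ‖w‖
  have hr : r < 1 := max_lt (mem_ball_zero_iff.1 hz) (mem_ball_zero_iff.1 hw)
  have hsub : closedBall (0 : ℂ) r ⊆ ball 0 1 := closedBall_subset_ball hr
  have hnorm : ∀ x ∈ closedBall (0 : ℂ) r, ‖x‖ ≤ r := fun x hx => mem_closedBall_zero_iff.1 hx
  refine (convex_closedBall 0 r).injOn_add_add_conj (α := r * A) (β := β + r * B)
    (fun x hx => hP x (hsub hx)) (fun x hx => hG x (hsub hx))
    (fun x hx => (hP' x (hsub hx)).trans (mul_le_mul_of_nonneg_right (hnorm x hx) hA))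
    (fun x hx => (hG' x (hsub hx)).trans
      (add_le_add_right (mul_le_mul_of_nonneg_right (hnorm x hx) hB) β))
    (mul_add_add_mul_lt_one ((norm_nonneg z).trans (le_max_left _ _)) hr hβ hAB)
    (mem_closedBall_zero_iff.2 (le_max_left _ _)) (mem_closedBall_zero_iff.2 (le_max_right _ _))

theorem norm_deriv_lt_norm_deriv_id_add (hβ : β < 1) (hAB : A + B ≤ 1 - β) {z : ℂ}
    (hz : z ∈ ball (0 : ℂ) 1) (hP : DifferentiableAt ℂ P z) (hP' : ‖deriv P z‖ ≤ ‖z‖ * A)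
    (hG' : ‖deriv G z‖ ≤ β + ‖z‖ * B) :
    ‖deriv G z‖ < ‖deriv (fun w => w + P w) z‖ := by
  have hlt := mul_add_add_mul_lt_one (norm_nonneg z) (mem_ball_zero_iff.1 hz) hβ hAB
  have hlower : 1 - ‖deriv P z‖ ≤ ‖1 + deriv P z‖ := by
    simpa using norm_sub_norm_le (1 : ℂ) (-deriv P z)
  rw [deriv_fun_add differentiableAt_fun_id hP, deriv_id'']
  linarith

end HarmonicCriterion

theorem coeff_criterion_univalent (a b : ℕ → ℂ)
    (hb1 : Norm.norm (b 1) < 1)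
    (hsum : Summable (fun k : ℕ =>
      ((k : ℝ) + 2) * (Norm.norm (a (k + 2)) + Norm.norm (b (k + 2)))))
    (hcoef : ∑' k : ℕ, ((k : ℝ) + 2) * (Norm.norm (a (k + 2)) + Norm.norm (b (k + 2)))
      ≤ 1 - Norm.norm (b 1)) :
    Set.InjOn
      (fun z : ℂ => (z + ∑' k : ℕ, a (k + 2) * z ^ (k + 2)) +
        starRingEnd ℂ (∑' k : ℕ, b (k + 1) * z ^ (k + 1)))
      (Metric.ball (0 : ℂ) 1) ∧
    ∀ z ∈ Metric.ball (0 : ℂ) 1,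
      Norm.norm (deriv (fun w : ℂ => ∑' k : ℕ, b (k + 1) * w ^ (k + 1)) z) <
      Norm.norm (deriv (fun w : ℂ => w + ∑' k : ℕ, a (k + 2) * w ^ (k + 2)) z) := by
  have hA : Summable fun k : ℕ => ((k : ℝ) + 2) * ‖a (k + 2)‖ :=
    hsum.of_nonneg_of_le (fun k => by positivity) fun k => by
      gcongr; exact le_add_of_nonneg_right (norm_nonneg _)
  have hB : Summable fun k : ℕ => ((k : ℝ) + 2) * ‖b (k + 2)‖ :=
    hsum.of_nonneg_of_le (fun k => by positivity) fun k => by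
      gcongr; exact le_add_of_nonneg_left (norm_nonneg _)
  have hAB : ∑' k : ℕ, ((k : ℝ) + 2) * ‖a (k + 2)‖ + ∑' k : ℕ, ((k : ℝ) + 2) * ‖b (k + 2)‖
      ≤ 1 - ‖b 1‖ := by
    rw [← hA.tsum_add hB]
    simpa only [mul_add] using hcoef
  have hcA : Summable fun k => ((k + 2 : ℕ) : ℝ) * ‖a (k + 2)‖ := by exact_mod_cast hA
  have hcB : Summable fun k => ((k + 1 : ℕ) : ℝ) * ‖b (k + 1)‖ :=
    (summable_nat_add_iff 1).1 (hB.congr fun k => by push_cast; ring)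
  have hP := fun z (hz : z ∈ ball (0 : ℂ) 1) =>
    (hasDerivAt_tsum_mul_pow_add (fun k => a (k + 2)) 2 hcA hz).differentiableAt
  have hG := fun z (hz : z ∈ ball (0 : ℂ) 1) =>
    (hasDerivAt_tsum_mul_pow_add (fun k => b (k + 1)) 1 hcB hz).differentiableAt
  have hP' := fun z (hz : z ∈ ball (0 : ℂ) 1) => norm_deriv_tsum_mul_pow_add_two_le a hcA hz
  have hG' := fun z (hz : z ∈ ball (0 : ℂ) 1) => norm_deriv_tsum_mul_pow_add_one_le b hcB hz
  exact ⟨injOn_ball_add_add_conj hb1 hAB (tsum_nonneg fun k => by positivity)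
      (tsum_nonneg fun k => by positivity) hP hG hP' hG',
    fun z hz => norm_deriv_lt_norm_deriv_id_add hb1 hAB hz (hP z hz) (hP' z hz) (hG' z hz)⟩
end

section
/- Let λ ∈ (0,1] and let (n_p)_{p≥1} be a strictly increasing sequence of nonnegative integers with liminf_{p→∞} n_p/n_{p+1} = λ. Suppose the coefficients (c_m) of a power series satisfy, for p ≥ 2 and 2 ≤ k ≤ n_{p+1} − n_p + 1, the bound |c_{n_p+k}| ≤ C · k² k! / (n_p+k)! · Π_{j=1}^{p−1} (n_{j+1} − n_j + 1)² (n_{j+1} − n_j + 1)! for a constant C. If λ = 1, then limsup_m |c_m|^{1/m} = 0, i.e., the series Σ c_m z^m has infinite radius of convergence. -/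
/-!
Fix `ε > 0`. As `liminf n_p / n_{p+1} = 1`, eventually `n_{j+1} ≤ (1 + ε) n_j`, i.e. the gaps
satisfy `n_{j+1} - n_j ≤ ε n_j` for `j ≥ J`. Write `m = n_p + k` with `n_p + 2 ≤ m ≤ n_{p+1} + 1`;
then every gap with `J ≤ j ≤ p` is at most `εm`. Since `(g + 1)² (g + 1)! ≤ (8g)^g` and the gaps
telescope, the factors with `j ≥ J` contribute at most `(8εm)^(n_p - n_J)`, while
`k² k! ≤ (4k)^k ≤ (8εm)^k`. Hence `|c_m| ≤ K (8εm)^m / m! ≤ K (8eε)^m` with `K` independent of `m`,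
and `limsup |c_m|^(1/m) ≤ 8eε`.
-/

open Filter Finset Real
open scoped Nat

theorem sq_mul_factorial_le_pow (k : ℕ) : k ^ 2 * k ! ≤ (4 * k) ^ k := by
  have hsq : k ^ 2 ≤ 4 ^ k := calc
    k ^ 2 ≤ (2 ^ k) ^ 2 := Nat.pow_le_pow_left Nat.lt_two_pow_self.le 2
    _ = 4 ^ k := by rw [← pow_mul, mul_comm, pow_mul]; norm_num
  rw [mul_pow]
  exact Nat.mul_le_mul hsq (Nat.factorial_le_pow k)

theorem succ_sq_mul_factorial_succ_le_pow (d : ℕ) : (d + 1) ^ 2 * (d + 1)! ≤ (8 * d) ^ d := by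
  have hsq : (d + 1) ^ 2 ≤ 4 ^ d := calc
    (d + 1) ^ 2 ≤ (2 ^ d) ^ 2 := Nat.pow_le_pow_left Nat.lt_two_pow_self 2
    _ = 4 ^ d := by rw [← pow_mul, mul_comm, pow_mul]; norm_num
  have hfac : (d + 1)! ≤ 2 ^ d * d ^ d :=
    Nat.mul_le_mul Nat.lt_two_pow_self (Nat.factorial_le_pow d)
  calc (d + 1) ^ 2 * (d + 1)! ≤ 4 ^ d * (2 ^ d * d ^ d) := Nat.mul_le_mul hsq hfac
    _ = (8 * d) ^ d := by rw [mul_pow, ← mul_assoc, ← mul_pow]; norm_num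

theorem sum_Ico_tsub {f : ℕ → ℕ} (hf : Monotone f) {a b : ℕ} (hab : a ≤ b) :
    ∑ j ∈ Ico a b, (f (j + 1) - f j) = f b - f a := by
  rw [sum_Ico_eq_sum_range]
  exact (sum_range_tsub (f := fun i => f (a + i)) (hf.comp fun _ _ h => by omega) (b - a)).trans
    (by rw [Nat.add_sub_cancel' hab, add_zero])

theorem mul_pow_div_factorial_le {x : ℝ} (hx : 0 ≤ x) (m : ℕ) :
    (x * m) ^ m / m ! ≤ (x * exp 1) ^ m := by
  rw [mul_pow, mul_pow, mul_div_assoc, ← exp_nat_mul, mul_one]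
  gcongr
  exact pow_div_factorial_le_exp _ (Nat.cast_nonneg m) m

theorem tendsto_norm_rpow_one_div_of_le_geometric {E : Type*} [SeminormedAddGroup E]
    {c : ℕ → E} (h : ∀ r > 0, ∃ K : ℝ, ∀ᶠ m in atTop, ‖c m‖ ≤ K * r ^ m) :
    Tendsto (fun m : ℕ => ‖c m‖ ^ (1 / (m : ℝ))) atTop (nhds 0) := by
  refine tendsto_order.2 ⟨fun a ha => .of_forall fun m => ha.trans_le (by positivity), ?_⟩
  intro δ hδ
  obtain ⟨K, hK⟩ := h (δ / 4) (by positivity)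
  filter_upwards [hK, (tendsto_pow_atTop_atTop_of_one_lt one_lt_two).eventually_ge_atTop K,
    eventually_ne_atTop 0] with m hcm hKm hm
  have hgeom : ‖c m‖ ≤ (δ / 2) ^ m := calc
    ‖c m‖ ≤ K * (δ / 4) ^ m := hcm
    _ ≤ 2 ^ m * (δ / 4) ^ m := by gcongr
    _ = (δ / 2) ^ m := by rw [← mul_pow]; ring_nf
  calc ‖c m‖ ^ (1 / (m : ℝ)) ≤ ((δ / 2) ^ m) ^ ((m : ℝ)⁻¹) := by
        rw [one_div]; gcongr
    _ = δ / 2 := pow_rpow_inv_natCast (by positivity) hm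
    _ < δ := half_lt_self hδ

theorem eventually_sub_le_mul_of_liminf_eq_one {np : ℕ → ℕ}
    (hlam : liminf (fun p : ℕ => (np p : ℝ) / np (p + 1)) atTop = 1) {ε : ℝ} (hε : 0 < ε) :
    ∀ᶠ j in atTop, ((np (j + 1) - np j : ℕ) : ℝ) ≤ ε * np j := by
  have hratio : ∀ᶠ j in atTop, (1 + ε)⁻¹ < (np j : ℝ) / np (j + 1) :=
    eventually_lt_of_lt_liminf (hlam ▸ inv_lt_one_of_one_lt₀ (by linarith : (1 : ℝ) < 1 + ε))
      (isBoundedUnder_of ⟨0, fun p => by positivity⟩)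
  filter_upwards [hratio] with j hj
  rcases le_total (np j) (np (j + 1)) with hle | hle
  · have hpos : (0 : ℝ) < np (j + 1) := by
      rcases (Nat.cast_nonneg (α := ℝ) (np (j + 1))).lt_or_eq with h | h
      · exact h
      · rw [← h, div_zero] at hj
        exact absurd hj (not_lt.2 (by positivity))
    rw [lt_div_iff₀ hpos, inv_mul_lt_iff₀ (by positivity)] at hj
    rw [Nat.cast_sub hle]
    linarith
  · rw [Nat.sub_eq_zero_of_le hle, Nat.cast_zero]
    positivity

def gapFactor (np : ℕ → ℕ) (j : ℕ) : ℝ :=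
  ((np (j + 1) - np j + 1 : ℕ) : ℝ) ^ 2 * ((np (j + 1) - np j + 1).factorial : ℝ)

theorem gapFactor_nonneg (np : ℕ → ℕ) (j : ℕ) : 0 ≤ gapFactor np j := by
  unfold gapFactor
  positivity

theorem gapFactor_le_pow {np : ℕ → ℕ} {j : ℕ} {x : ℝ}
    (h : ((np (j + 1) - np j : ℕ) : ℝ) ≤ x) :
    gapFactor np j ≤ (8 * x) ^ (np (j + 1) - np j) := by
  set d := np (j + 1) - np j
  calc gapFactor np j = (((d + 1) ^ 2 * (d + 1)! : ℕ) : ℝ) := by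
        simp only [gapFactor, d]; push_cast; rfl
    _ ≤ (((8 * d) ^ d : ℕ) : ℝ) := by exact_mod_cast succ_sq_mul_factorial_succ_le_pow d
    _ ≤ (8 * x) ^ d := by push_cast; gcongr

theorem prod_gapFactor_Ico_le_pow {np : ℕ → ℕ} (hmono : Monotone np) {J p : ℕ} (hJp : J ≤ p)
    {x : ℝ} (h : ∀ j ∈ Ico J p, ((np (j + 1) - np j : ℕ) : ℝ) ≤ x) :
    ∏ j ∈ Ico J p, gapFactor np j ≤ (8 * x) ^ (np p - np J) := calc
  ∏ j ∈ Ico J p, gapFactor np j ≤ ∏ j ∈ Ico J p, (8 * x) ^ (np (j + 1) - np j) :=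
    prod_le_prod (fun j _ => gapFactor_nonneg np j) fun j hj => gapFactor_le_pow (h j hj)
  _ = (8 * x) ^ (np p - np J) := by rw [prod_pow_eq_pow_sum, sum_Ico_tsub hmono hJp]

theorem StrictMono.exists_ge_lt_le_succ {np : ℕ → ℕ} (hmono : StrictMono np) {J n : ℕ}
    (hn : np J < n) : ∃ p, J ≤ p ∧ np p < n ∧ n ≤ np (p + 1) := by
  have hshift : StrictMono fun i => np (J + i) := hmono.comp fun _ _ h => Nat.add_lt_add_left h J
  obtain ⟨i, hlt, hle⟩ := hshift.exists_between_of_tendsto_atTop hshift.tendsto_atTop hn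
  exact ⟨J + i, Nat.le_add_right J i, hlt, hle⟩

theorem norm_le_mul_pow_div_factorial {E : Type*} [SeminormedAddGroup E] {np : ℕ → ℕ}
    (hmono : StrictMono np) {c : ℕ → E} {C : ℝ} (hC : 0 ≤ C)
    (hbound : ∀ p : ℕ, 2 ≤ p → ∀ k : ℕ, 2 ≤ k → k ≤ np (p + 1) - np p + 1 →
      ‖c (np p + k)‖ ≤ C * (k : ℝ) ^ 2 * k ! / (np p + k)! * ∏ j ∈ Icc 1 (p - 1), gapFactor np j)
    {ε : ℝ} {J : ℕ} (hJ : 2 ≤ J) (hgap : ∀ j, J ≤ j → ((np (j + 1) - np j : ℕ) : ℝ) ≤ ε * np j)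
    {m : ℕ} (hm : np J + 2 ≤ m) (hεm : 1 ≤ ε * m) :
    ‖c m‖ ≤ C * (∏ j ∈ Ico 1 J, gapFactor np j) * (8 * ε * m) ^ m / m ! := by
  obtain ⟨p, hJp, hlt, hle⟩ := hmono.exists_ge_lt_le_succ (J := J) (n := m - 1) (by omega)
  set k := m - np p
  have hb := (show np p + k = m by omega) ▸ hbound p (by omega) k (by omega) (by omega)
  have hε : 0 < ε := by
    by_contra! h
    nlinarith [(Nat.cast_nonneg m : (0 : ℝ) ≤ m)]
  have hnp_le : ∀ j ≤ p, (np j : ℝ) ≤ m := fun j hj => by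
    exact_mod_cast (hmono.monotone hj).trans (by omega)
  have hgap_le : ∀ j ∈ Ico J (p + 1), ((np (j + 1) - np j : ℕ) : ℝ) ≤ ε * m := fun j hj => by
    obtain ⟨hJj, hjp⟩ := mem_Ico.1 hj
    exact (hgap j hJj).trans (mul_le_mul_of_nonneg_left (hnp_le j (by omega)) hε.le)
  have hhead : (k : ℝ) ^ 2 * k ! ≤ (8 * ε * m) ^ k := by
    have hk : (k : ℝ) ≤ ε * m + 1 := by
      have hk' : (k : ℝ) ≤ ((np (p + 1) - np p : ℕ) : ℝ) + 1 := by
        exact_mod_cast (show k ≤ np (p + 1) - np p + 1 by omega)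
      linarith [hgap_le p (mem_Ico.2 ⟨hJp, p.lt_succ_self⟩)]
    calc (k : ℝ) ^ 2 * k ! = ((k ^ 2 * k ! : ℕ) : ℝ) := by push_cast; rfl
      _ ≤ (((4 * k) ^ k : ℕ) : ℝ) := by exact_mod_cast sq_mul_factorial_le_pow k
      _ ≤ (8 * ε * m) ^ k := by push_cast; exact pow_le_pow_left₀ (by positivity) (by linarith) k
  have htail : ∏ j ∈ Ico J p, gapFactor np j ≤ (8 * ε * m) ^ (np p - np J) := by
    rw [mul_assoc]
    exact prod_gapFactor_Ico_le_pow hmono.monotone hJp fun j hj =>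
      hgap_le j (Ico_subset_Ico_right p.le_succ hj)
  set A := ∏ j ∈ Ico 1 J, gapFactor np j
  set T := ∏ j ∈ Ico J p, gapFactor np j
  have hsplit : ∏ j ∈ Icc 1 (p - 1), gapFactor np j = A * T := by
    have hp : ¬IsMin p := by simp only [isMin_iff_eq_bot, Nat.bot_eq_zero]; omega
    rw [Icc_sub_one_right_eq_Ico_of_not_isMin hp, prod_Ico_consecutive _ (by omega) hJp]
  have hA : 0 ≤ A := prod_nonneg fun j _ => gapFactor_nonneg np j
  have hT : 0 ≤ T := prod_nonneg fun j _ => gapFactor_nonneg np j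
  calc ‖c m‖ ≤ C * ((k : ℝ) ^ 2 * k !) * (A * T) / m ! := by
        rw [hsplit] at hb; convert hb using 1; ring
    _ ≤ C * (8 * ε * m) ^ k * (A * (8 * ε * m) ^ (np p - np J)) / m ! := by gcongr
    _ = C * A * (8 * ε * m) ^ (k + (np p - np J)) / m ! := by ring
    _ ≤ C * A * (8 * ε * m) ^ m / m ! := by
        gcongr
        · linarith
        · omega

theorem entire_of_liminf_one (np : ℕ → ℕ) (hmono : StrictMono np)
    (hlam : liminf (fun p : ℕ => (np p : ℝ) / np (p + 1)) atTop = 1)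
    (c : ℕ → ℂ) (C : ℝ) (hC : 0 < C)
    (hbound : ∀ p : ℕ, 2 ≤ p → ∀ k : ℕ, 2 ≤ k → k ≤ np (p + 1) - np p + 1 →
      ‖c (np p + k)‖ ≤
        C * (k : ℝ) ^ 2 * k.factorial / (np p + k).factorial *
          ∏ j ∈ Finset.Icc 1 (p - 1),
            (((np (j + 1) - np j + 1 : ℕ) : ℝ) ^ 2 *
              ((np (j + 1) - np j + 1).factorial : ℝ))) :
    limsup (fun m : ℕ => ‖c m‖ ^ (1 / (m : ℝ))) atTop = 0 := by
  refine (tendsto_norm_rpow_one_div_of_le_geometric fun r hr => ?_).limsup_eq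
  set ε := r / (8 * exp 1) with hε_def
  have hε : 0 < ε := by positivity
  obtain ⟨J, hJ⟩ := eventually_atTop.1
    ((eventually_sub_le_mul_of_liminf_eq_one hlam hε).and (eventually_ge_atTop 2))
  have hA : 0 ≤ ∏ j ∈ Ico 1 J, gapFactor np j := prod_nonneg fun j _ => gapFactor_nonneg np j
  refine ⟨C * ∏ j ∈ Ico 1 J, gapFactor np j, ?_⟩
  filter_upwards [eventually_ge_atTop (np J + 2),
    (tendsto_natCast_atTop_atTop.const_mul_atTop hε).eventually_ge_atTop 1] with m hm hεm
  calc ‖c m‖ ≤ C * (∏ j ∈ Ico 1 J, gapFactor np j) * (8 * ε * m) ^ m / m ! :=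
        norm_le_mul_pow_div_factorial hmono hC.le hbound (hJ J le_rfl).2 (fun j hj => (hJ j hj).1)
          hm hεm
    _ ≤ C * (∏ j ∈ Ico 1 J, gapFactor np j) * (8 * ε * exp 1) ^ m := by
        rw [mul_div_assoc]
        gcongr
        exact mul_pow_div_factorial_le (by positivity) m
    _ = C * (∏ j ∈ Ico 1 J, gapFactor np j) * r ^ m := by
        rw [hε_def]
        field_simp
end

section
/- Let f(z) = Σ_{k≥0} a_k z^k + conj(Σ_{k≥1} b_k z^k) be harmonic in 𝔻 with max{limsup_m |a_m|^{1/m}, limsup_m |b_m|^{1/m}} ≤ 1, and let (n_p) be a strictly increasing sequence of nonnegative integers whose normalized derivatives lie in S_H^c (so the coefficient bounds |a_{n_p+k}| ≤ ((2k²+1)/3) · k!(n_p+1)!/(n_p+k)! · |a_{n_p+1}| hold for all p, k ≥ 2, and similarly for b). If n_{p+2} − 2n_{p+1} + n_p = o(n_p), then both power series Σ a_k z^k and Σ b_k z^k have infinite radius of convergence, i.e., f is a harmonic entire mapping. -/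
/-!
Write `d p = n (p + 1) - n p` and `r p = d p / n p`. Then
`r (p + 1) * (1 + r p) - r p = (d (p + 1) - d p) / n p → 0`, so `r (p + 1)` is essentially
`r p / (1 + r p)`: while `r p ≥ δ` it drops by at least `δ ^ 2 / 4` per step, and below `δ` it
stays there. Hence the gaps are `o(n p)`. The coefficient bound at `n p` gives, for `j ≤ d p`,
`‖a (n p + 1 + j)‖ ≤ (4 (j + 1) / (n p + 1)) ^ j * ‖a (n p + 1)‖ ≤ η ^ j * ‖a (n p + 1)‖` as soon
as `4 (d p + 1) ≤ η (n p + 1)`. Chaining these blocks gives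
`‖a (n P + 1 + j)‖ ≤ η ^ j * ‖a (n P + 1)‖` for all `j`, and `η` can be taken arbitrarily small.
-/

open Filter Topology Nat

lemma le_max_sub_of_mul_one_add_sub_le {r s δ : ℝ} (hr : 0 ≤ r) (hδ : 0 < δ) (hδ1 : δ ≤ 1)
    (h : s * (1 + r) - r ≤ δ ^ 2 / 8) : s ≤ max δ (r - δ ^ 2 / 4) := by
  rcases le_or_gt r δ with hrδ | hrδ
  · refine le_max_of_le_left (le_of_mul_le_mul_right ?_ (by linarith : 0 < 1 + r))
    nlinarith [mul_nonneg (sub_nonneg.2 hrδ) (sub_nonneg.2 hδ1)]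
  · refine le_max_of_le_right (le_of_mul_le_mul_right ?_ (by linarith : 0 < 1 + r))
    nlinarith [mul_nonneg (sub_nonneg.2 hrδ.le) hr, mul_nonneg (mul_nonneg hδ.le (sub_nonneg.2 hδ1)) hr,
      mul_nonneg hδ.le (sub_nonneg.2 hrδ.le)]

lemma eventually_le_of_eventually_le_max_sub {x : ℕ → ℝ} {δ c : ℝ} (hc : 0 < c)
    (h : ∀ᶠ p in atTop, x (p + 1) ≤ max δ (x p - c)) : ∀ᶠ p in atTop, x p ≤ δ := by
  obtain ⟨N, hN⟩ := eventually_atTop.1 h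
  obtain ⟨q, hNq, hq⟩ : ∃ q ≥ N, x q ≤ δ := by
    by_contra! hbig
    have hdesc : ∀ j : ℕ, x (N + j) ≤ x N - j * c := by
      intro j
      induction j with
      | zero => simp
      | succ j ih =>
        have hstep := le_max_iff.1 (hN (N + j) (Nat.le_add_right N j))
        have hgt := hbig (N + j + 1) (by omega)
        rw [← add_assoc]
        push_cast
        rcases hstep with hstep | hstep <;> linarith
    obtain ⟨j, hj⟩ := exists_nat_gt ((x N - δ) / c)
    have hgt := hbig (N + j) (Nat.le_add_right N j)
    rw [div_lt_iff₀ hc] at hj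
    linarith [hdesc j]
  refine eventually_atTop.2 ⟨q, fun p hp => ?_⟩
  induction p, hp using Nat.le_induction with
  | base => exact hq
  | succ p hqp ih => exact (hN p (hNq.trans hqp)).trans (max_le le_rfl (by linarith))

theorem tendsto_zero_of_tendsto_mul_one_add_sub {r : ℕ → ℝ} (hr : ∀ᶠ p in atTop, 0 ≤ r p)
    (h : Tendsto (fun p => r (p + 1) * (1 + r p) - r p) atTop (𝓝 0)) :
    Tendsto r atTop (𝓝 0) := by
  refine tendsto_order.2 ⟨fun a ha => hr.mono fun p hp => ha.trans_le hp, fun ε hε => ?_⟩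
  set δ := min (ε / 2) 1
  have hδ : 0 < δ := by positivity
  have hdrop : ∀ᶠ p in atTop, r (p + 1) ≤ max δ (r p - δ ^ 2 / 4) := by
    filter_upwards [hr, h.eventually (ge_mem_nhds (by positivity : (0 : ℝ) < δ ^ 2 / 8))]
      with p hp hsmall
    exact le_max_sub_of_mul_one_add_sub_le hp hδ (min_le_right _ _) hsmall
  filter_upwards [eventually_le_of_eventually_le_max_sub (by positivity) hdrop] with p hp
  exact hp.trans_lt ((min_le_left _ _).trans_lt (half_lt_self hε))

theorem tendsto_sub_div_of_tendsto_second_diff_div {n : ℕ → ℝ} (hmono : Monotone n)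
    (hpos : ∀ᶠ p in atTop, 0 < n p)
    (h : Tendsto (fun p => (n (p + 2) - 2 * n (p + 1) + n p) / n p) atTop (𝓝 0)) :
    Tendsto (fun p => (n (p + 1) - n p) / n p) atTop (𝓝 0) := by
  refine tendsto_zero_of_tendsto_mul_one_add_sub ?_ (h.congr' ?_)
  · filter_upwards [hpos] with p hp
    exact div_nonneg (sub_nonneg.2 (hmono p.le_succ)) hp.le
  · filter_upwards [hpos] with p hp
    have hp1 : 0 < n (p + 1) := hp.trans_le (hmono p.le_succ)
    field_simp
    ring

lemma factorial_le_pow_pred (k : ℕ) : k ! ≤ k ^ (k - 1) := by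
  induction k with
  | zero => simp
  | succ k ih =>
    rcases Nat.eq_zero_or_pos k with rfl | hk
    · simp
    calc (k + 1)! = (k + 1) * k ! := factorial_succ k
      _ ≤ (k + 1) * (k + 1) ^ (k - 1) :=
          Nat.mul_le_mul_left _ (ih.trans (Nat.pow_le_pow_left k.le_succ _))
      _ = (k + 1) ^ k := by rw [← pow_succ']; congr 1; omega

lemma two_mul_sq_add_one_div_three_le_four_pow (k : ℕ) (hk : 1 ≤ k) :
    (2 * (k : ℝ) ^ 2 + 1) / 3 ≤ 4 ^ (k - 1) := by
  have hk2 : k ≤ 2 ^ (k - 1) := by have := @Nat.lt_two_pow_self (k - 1); omega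
  have hkR : (1 : ℝ) ≤ k := by exact_mod_cast hk
  have hk2R : (k : ℝ) ≤ 2 ^ (k - 1) := by exact_mod_cast hk2
  calc (2 * (k : ℝ) ^ 2 + 1) / 3 ≤ (2 ^ (k - 1)) ^ 2 := by nlinarith
    _ = 4 ^ (k - 1) := by rw [← pow_mul, mul_comm, pow_mul]; norm_num

theorem coeff_bound_factor_le (n k : ℕ) (hk : 1 ≤ k) :
    (2 * (k : ℝ) ^ 2 + 1) / 3 * ((k ! : ℝ) * ((n + 1)! : ℝ) / ((n + k)! : ℝ)) ≤
      (4 * k / (n + 1)) ^ (k - 1) := by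
  have hfact : ((n + 1)! : ℝ) * ((n : ℝ) + 1) ^ (k - 1) ≤ (n + k)! := by
    have := Nat.factorial_mul_pow_sub_le_factorial (show n + 1 ≤ n + k by omega)
    rw [show n + k - (n + 1) = k - 1 by omega] at this
    exact_mod_cast this
  have hratio : (k ! : ℝ) * ((n + 1)! : ℝ) / ((n + k)! : ℝ) ≤ (k : ℝ) ^ (k - 1) / (n + 1) ^ (k - 1) := by
    rw [div_le_div_iff₀ (by positivity) (by positivity)]
    have hk : (k ! : ℝ) ≤ (k : ℝ) ^ (k - 1) := by exact_mod_cast factorial_le_pow_pred k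
    calc (k ! : ℝ) * (n + 1)! * (n + 1) ^ (k - 1) = k ! * ((n + 1)! * (n + 1) ^ (k - 1)) := by ring
      _ ≤ k ^ (k - 1) * (n + k)! := by gcongr
  calc (2 * (k : ℝ) ^ 2 + 1) / 3 * ((k ! : ℝ) * ((n + 1)! : ℝ) / ((n + k)! : ℝ))
      ≤ 4 ^ (k - 1) * ((k : ℝ) ^ (k - 1) / (n + 1) ^ (k - 1)) := by
        gcongr
        exact two_mul_sq_add_one_div_three_le_four_pow k hk
    _ = (4 * k / (n + 1)) ^ (k - 1) := by rw [div_pow, mul_pow, mul_div_assoc]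

lemma le_pow_mul_of_coeff_bound {u : ℕ → ℝ} {n d : ℕ} {η : ℝ} (hu : 0 ≤ u (n + 1))
    (hbound : ∀ k : ℕ, 2 ≤ k → u (n + k) ≤
      (2 * (k : ℝ) ^ 2 + 1) / 3 * ((k ! : ℝ) * ((n + 1)! : ℝ) / ((n + k)! : ℝ)) * u (n + 1))
    (hη : 4 * ((d : ℝ) + 1) ≤ η * (n + 1)) :
    ∀ j ≤ d, u (n + 1 + j) ≤ η ^ j * u (n + 1) := by
  intro j hj
  rcases Nat.eq_zero_or_pos j with rfl | hj0
  · simp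
  have hbase : 4 * ((j + 1 : ℕ) : ℝ) / (n + 1) ≤ η := by
    have hjd : (j : ℝ) ≤ d := by exact_mod_cast hj
    rw [div_le_iff₀ (by positivity)]
    push_cast
    linarith
  calc u (n + 1 + j) = u (n + (j + 1)) := by rw [add_assoc, add_comm 1 j]
    _ ≤ _ := hbound (j + 1) (by omega)
    _ ≤ (4 * ((j + 1 : ℕ) : ℝ) / (n + 1)) ^ j * u (n + 1) := by
        gcongr
        simpa using coeff_bound_factor_le n (j + 1) (by omega)
    _ ≤ η ^ j * u (n + 1) := by gcongr

theorem le_pow_mul_of_forall_block {u : ℕ → ℝ} {n : ℕ → ℕ} (hn : StrictMono n) {η : ℝ}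
    (hη : 0 ≤ η) (hblock : ∀ p, ∀ j ≤ n (p + 1) - n p, u (n p + 1 + j) ≤ η ^ j * u (n p + 1))
    (j : ℕ) : u (n 0 + 1 + j) ≤ η ^ j * u (n 0 + 1) := by
  have hupto : ∀ i, ∀ j ≤ n (i + 1) - n 0, u (n 0 + 1 + j) ≤ η ^ j * u (n 0 + 1) := by
    intro i
    induction i with
    | zero => exact hblock 0
    | succ i ih =>
      intro j hj
      by_cases hji : j ≤ n (i + 1) - n 0
      · exact ih j hji
      have h0 : n 0 ≤ n (i + 1) := hn.monotone (Nat.zero_le _)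
      obtain ⟨l, rfl⟩ : ∃ l, j = (n (i + 1) - n 0) + l := ⟨j - (n (i + 1) - n 0), by omega⟩
      have hhead : u (n (i + 1) + 1) ≤ η ^ (n (i + 1) - n 0) * u (n 0 + 1) := by
        simpa [show n 0 + 1 + (n (i + 1) - n 0) = n (i + 1) + 1 by omega] using ih _ le_rfl
      calc u (n 0 + 1 + (n (i + 1) - n 0 + l)) = u (n (i + 1) + 1 + l) := by congr 1; omega
        _ ≤ η ^ l * u (n (i + 1) + 1) := hblock (i + 1) l (by omega)
        _ ≤ η ^ l * (η ^ (n (i + 1) - n 0) * u (n 0 + 1)) := by gcongr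
        _ = _ := by ring
  have hgrowth := hn.add_le_nat (j + 1) 0
  rw [add_zero] at hgrowth
  exact hupto j j (by omega)

theorem summable_mul_pow_of_norm_le {𝕜 : Type*} [NormedDivisionRing 𝕜] [CompleteSpace 𝕜]
    {a : ℕ → 𝕜} {N : ℕ} {C η : ℝ} (hη : 0 ≤ η) (h : ∀ j, ‖a (N + j)‖ ≤ η ^ j * C) {z : 𝕜}
    (hz : η * ‖z‖ < 1) : Summable (fun k => a k * z ^ k) := by
  rw [← summable_nat_add_iff N]
  refine Summable.of_norm_bounded
    ((summable_geometric_of_lt_one (by positivity) hz).mul_left (C * ‖z‖ ^ N)) fun j => ?_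
  calc ‖a (j + N) * z ^ (j + N)‖ = ‖a (N + j)‖ * ‖z‖ ^ (j + N) := by
        rw [norm_mul, norm_pow, add_comm j]
    _ ≤ η ^ j * C * ‖z‖ ^ (j + N) := by gcongr; exact h j
    _ = C * ‖z‖ ^ N * (η * ‖z‖) ^ j := by ring

theorem summable_mul_pow_of_coeff_bound {𝕜 : Type*} [NormedDivisionRing 𝕜] [CompleteSpace 𝕜]
    {a : ℕ → 𝕜} {n : ℕ → ℕ} (hn : StrictMono n)
    (hbound : ∀ p : ℕ, 1 ≤ p → ∀ k : ℕ, 2 ≤ k → ‖a (n p + k)‖ ≤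
      (2 * (k : ℝ) ^ 2 + 1) / 3 * ((k ! : ℝ) * ((n p + 1)! : ℝ) / ((n p + k)! : ℝ)) *
        ‖a (n p + 1)‖)
    (hgap : Tendsto (fun p => ((n (p + 1) : ℝ) - n p + 1) / n p) atTop (𝓝 0)) (z : 𝕜) :
    Summable (fun k => a k * z ^ k) := by
  set η := (‖z‖ + 1)⁻¹
  have hη : 0 < η := by positivity
  have hηz : η * ‖z‖ < 1 := by
    rw [inv_mul_lt_iff₀ (by positivity)]
    linarith
  obtain ⟨P, hP⟩ := eventually_atTop.1 <|
    (hgap.eventually (gt_mem_nhds (by positivity : (0 : ℝ) < η / 4))).and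
      (eventually_ge_atTop 1)
  have hblock (p : ℕ) : ∀ j ≤ n (P + p + 1) - n (P + p),
      ‖a (n (P + p) + 1 + j)‖ ≤ η ^ j * ‖a (n (P + p) + 1)‖ := by
    obtain ⟨hsmall, hp1⟩ := hP (P + p) (Nat.le_add_right P p)
    refine le_pow_mul_of_coeff_bound (u := fun m => ‖a m‖) (norm_nonneg _) (hbound _ hp1) ?_
    have hnp : (0 : ℝ) < n (P + p) := by exact_mod_cast hp1.trans hn.le_apply
    rw [Nat.cast_sub (hn.monotone (Nat.le_succ _))]
    rw [div_lt_iff₀ hnp] at hsmall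
    linarith
  refine summable_mul_pow_of_norm_le (N := n P + 1) (C := ‖a (n P + 1)‖) hη.le (fun j => ?_) hηz
  simpa using le_pow_mul_of_forall_block (u := fun m => ‖a m‖) (n := fun p => n (P + p))
    (hn.comp fun _ _ h => Nat.add_lt_add_left h P) hη.le hblock j

theorem entire_of_small_second_differences_general (a b : ℕ → ℂ) (np : ℕ → ℕ)
    (hmono : StrictMono np)
    (hboundA : ∀ p : ℕ, 1 ≤ p → ∀ k : ℕ, 2 ≤ k →
      ‖a (np p + k)‖ ≤
        (2 * (k : ℝ) ^ 2 + 1) / 3 *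
          ((k.factorial : ℝ) * ((np p + 1).factorial : ℝ) / ((np p + k).factorial : ℝ)) *
          ‖a (np p + 1)‖)
    (hboundB : ∀ p : ℕ, 1 ≤ p → ∀ k : ℕ, 2 ≤ k →
      ‖b (np p + k)‖ ≤
        (2 * (k : ℝ) ^ 2 + 1) / 3 *
          ((k.factorial : ℝ) * ((np p + 1).factorial : ℝ) / ((np p + k).factorial : ℝ)) *
          ‖b (np p + 1)‖)
    (hsecond : Tendsto
      (fun p : ℕ => (((np (p + 2) : ℤ) - 2 * (np (p + 1) : ℤ) + (np p : ℤ) : ℤ) : ℝ) / (np p : ℝ))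
      atTop (nhds 0)) :
    ∀ z : ℂ, Summable (fun k : ℕ => a k * z ^ k) ∧ Summable (fun k : ℕ => b k * z ^ k) := by
  have hnp : Tendsto (fun p => (np p : ℝ)) atTop atTop :=
    tendsto_natCast_atTop_atTop.comp hmono.tendsto_atTop
  have hratio := tendsto_sub_div_of_tendsto_second_diff_div
    (fun _ _ h => by exact_mod_cast hmono.monotone h) (hnp.eventually_gt_atTop 0)
    (by simpa using hsecond)
  have hgap : Tendsto (fun p => ((np (p + 1) : ℝ) - np p + 1) / np p) atTop (𝓝 0) := by
    simpa [add_div] using hratio.add hnp.inv_tendsto_atTop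
  exact fun z => ⟨summable_mul_pow_of_coeff_bound hmono hboundA hgap z,
    summable_mul_pow_of_coeff_bound hmono hboundB hgap z⟩

theorem entire_of_small_second_differences (a b : ℕ → ℂ) (np : ℕ → ℕ)
    (hmono : StrictMono np)
    (hra : limsup (fun m : ℕ => ((‖a m‖ ^ (1 / (m : ℝ)) : ℝ) : EReal)) atTop ≤ 1)
    (hrb : limsup (fun m : ℕ => ((‖b m‖ ^ (1 / (m : ℝ)) : ℝ) : EReal)) atTop ≤ 1)
    (hboundA : ∀ p : ℕ, 1 ≤ p → ∀ k : ℕ, 2 ≤ k →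
      ‖a (np p + k)‖ ≤
        (2 * (k : ℝ) ^ 2 + 1) / 3 *
          ((k.factorial : ℝ) * ((np p + 1).factorial : ℝ) / ((np p + k).factorial : ℝ)) *
          ‖a (np p + 1)‖)
    (hboundB : ∀ p : ℕ, 1 ≤ p → ∀ k : ℕ, 2 ≤ k →
      ‖b (np p + k)‖ ≤
        (2 * (k : ℝ) ^ 2 + 1) / 3 *
          ((k.factorial : ℝ) * ((np p + 1).factorial : ℝ) / ((np p + k).factorial : ℝ)) *
          ‖b (np p + 1)‖)
    (hsecond : Tendsto
      (fun p : ℕ => (((np (p + 2) : ℤ) - 2 * (np (p + 1) : ℤ) + (np p : ℤ) : ℤ) : ℝ) / (np p : ℝ))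
      atTop (nhds 0)) :
    ∀ z : ℂ, Summable (fun k : ℕ => a k * z ^ k) ∧ Summable (fun k : ℕ => b k * z ^ k) :=
  entire_of_small_second_differences_general a b np hmono hboundA hboundB hsecond
end
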